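/- arXiv:1108.6232 — 3 statements merged into one kernel-verified Lean document; each statement's English description precedes it below -/
import Mathlib

section
/- Let Γ be a finite graph with directed edges and Cheeger constant h(Γ) = (1/2)·inf{|∂F|/|F| : ∅ ≠ F ⊆ Γ, |F| ≤ |Γ|/2}, where ∂F is the set of directed edges with exactly one endpoint in F. If the coboundary map d : ℓ¹(Γ)/ℂ → ℓ¹(E) satisfies ‖df̄‖_{ℓ¹} ≥ ε‖f̄‖_{ℓ¹/ℂ} for all f̄, then h(Γ) ≥ ε/2. -/
/-!
Apply the hypothesis to the indicator function `𝟙_F`. Its coboundary has `ℓ¹` norm `|∂F|`, while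
for every constant `c` we have `‖𝟙_F + c‖₁ = |F| ‖1 + c‖ + |Fᶜ| ‖c‖ ≥ |F| (‖1 + c‖ + ‖c‖) ≥ |F|`,
because `|F| ≤ |Fᶜ|`; so the quotient norm of `𝟙_F` is at least `|F|`.
-/

open scoped BigOperators

/-- The set of directed edges of `E` with exactly one endpoint in `F`. -/
def boundaryEdges {Γ : Type*} [DecidableEq Γ] (E : Finset (Γ × Γ)) (F : Finset Γ) :
    Finset (Γ × Γ) :=
  E.filter (fun e => (e.1 ∈ F ∧ e.2 ∉ F) ∨ (e.2 ∈ F ∧ e.1 ∉ F))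

open Finset

section IndicatorNorms

variable {Γ G : Type*} [SeminormedAddCommGroup G]

theorem sum_norm_indicator_sub_eq_mul_card_boundaryEdges [DecidableEq Γ]
    (E : Finset (Γ × Γ)) (F : Finset Γ) (a : G) :
    ∑ e ∈ E, ‖(F : Set Γ).indicator (fun _ => a) e.2 - (F : Set Γ).indicator (fun _ => a) e.1‖ =
      ‖a‖ * (boundaryEdges E F).card := by
  rw [boundaryEdges, card_filter, Nat.cast_sum, mul_sum]
  refine sum_congr rfl fun e _ => ?_
  by_cases h1 : e.1 ∈ F <;> by_cases h2 : e.2 ∈ F <;> simp [h1, h2]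

theorem card_mul_norm_le_sum_norm_indicator_add [Fintype Γ] {F : Finset Γ}
    (hF : 2 * F.card ≤ Fintype.card Γ) (a c : G) :
    F.card * ‖a‖ ≤ ∑ γ, ‖(F : Set Γ).indicator (fun _ => a) γ + c‖ := by
  classical
  have hsplit : ∑ γ, ‖(F : Set Γ).indicator (fun _ => a) γ + c‖ =
      F.card * ‖a + c‖ + Fᶜ.card * ‖c‖ := by
    rw [← sum_add_sum_compl F]
    congr 1
    · rw [sum_congr rfl fun γ hγ => by rw [Set.indicator_of_mem (mem_coe.2 hγ)]]
      simp
    · rw [sum_congr rfl fun γ hγ => by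
        rw [Set.indicator_of_notMem (by simpa using hγ), zero_add]]
      simp
  have hcompl : (F.card : ℝ) ≤ Fᶜ.card := by
    rw [card_compl, Nat.cast_sub (card_le_univ F)]
    have : (2 : ℝ) * F.card ≤ Fintype.card Γ := by exact_mod_cast hF
    linarith
  have htri : ‖a‖ ≤ ‖a + c‖ + ‖c‖ := by simpa using norm_sub_le (a + c) c
  calc (F.card : ℝ) * ‖a‖ ≤ F.card * (‖a + c‖ + ‖c‖) := by gcongr
    _ ≤ F.card * ‖a + c‖ + Fᶜ.card * ‖c‖ := by
      rw [mul_add]; gcongr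
    _ = _ := hsplit.symm

theorem card_mul_norm_le_sInf_sum_norm_indicator_add [Fintype Γ] {F : Finset Γ}
    (hF : 2 * F.card ≤ Fintype.card Γ) (a : G) :
    F.card * ‖a‖ ≤ sInf {r : ℝ | ∃ c : G, r = ∑ γ, ‖(F : Set Γ).indicator (fun _ => a) γ + c‖} :=
  le_csInf ⟨_, 0, rfl⟩ fun _ ⟨c, hc⟩ => hc ▸ card_mul_norm_le_sum_norm_indicator_add hF a c

end IndicatorNorms

theorem cheeger_of_coboundary_bounded_below_general (Γ : Type*) [Fintype Γ] [DecidableEq Γ]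
    (E : Finset (Γ × Γ)) (ε : ℝ)
    (h : ∀ f : Γ → ℂ,
      ε * sInf {r : ℝ | ∃ c : ℂ, r = ∑ γ, ‖f γ + c‖} ≤
        ∑ e ∈ E, ‖f e.2 - f e.1‖) :
    ∀ F : Finset Γ, F.Nonempty → 2 * F.card ≤ Fintype.card Γ →
      ε * F.card ≤ ((boundaryEdges E F).card : ℝ) := by
  intro F _ hF
  rcases le_or_gt ε 0 with hε | hε
  · exact (mul_nonpos_of_nonpos_of_nonneg hε F.card.cast_nonneg).trans (Nat.cast_nonneg _)
  set f : Γ → ℂ := (F : Set Γ).indicator fun _ => 1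
  calc ε * F.card ≤ ε * sInf {r : ℝ | ∃ c : ℂ, r = ∑ γ, ‖f γ + c‖} := by
        gcongr
        simpa using card_mul_norm_le_sInf_sum_norm_indicator_add hF (1 : ℂ)
    _ ≤ ∑ e ∈ E, ‖f e.2 - f e.1‖ := h f
    _ = (boundaryEdges E F).card := by
        simpa using sum_norm_indicator_sub_eq_mul_card_boundaryEdges E F (1 : ℂ)

/-- if `‖d f̄‖₁ ≥ ε ‖f̄‖_{ℓ¹/ℂ}` for every `f̄ ∈ ℓ¹(Γ)/ℂ`, then the
Cheeger constant satisfies `h(Γ) ≥ ε/2`, i.e. `|∂F| ≥ ε |F|` for every nonempty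
`F ⊆ Γ` with `|F| ≤ |Γ|/2`. -/
theorem cheeger_of_coboundary_bounded_below (Γ : Type*) [Fintype Γ] [DecidableEq Γ]
    (E : Finset (Γ × Γ)) (hsymm : ∀ x y : Γ, (x, y) ∈ E ↔ (y, x) ∈ E) (ε : ℝ)
    (h : ∀ f : Γ → ℂ,
      ε * sInf {r : ℝ | ∃ c : ℂ, r = ∑ γ, ‖f γ + c‖} ≤
        ∑ e ∈ E, ‖f e.2 - f e.1‖) :
    ∀ F : Finset Γ, F.Nonempty → 2 * F.card ≤ Fintype.card Γ →
      ε * F.card ≤ ((boundaryEdges E F).card : ℝ) :=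
  cheeger_of_coboundary_bounded_below_general Γ E ε h
end

section
/- Let f : Γ → ℝ be a nonnegative function on a finite set Γ which can be written as f = Σ_j a_j χ_{F_j} with a_j > 0 and a nested family of subsets F_1 ⊆ F_2 ⊆ … ⊆ F_n. Then for the graph coboundary d, ‖df‖_{ℓ¹} = Σ_j a_j ‖d χ_{F_j}‖_{ℓ¹}. -/
open scoped BigOperators

/-- if `f = ∑ⱼ aⱼ χ_{Fⱼ}` with `aⱼ > 0` and nested subsets
`F₁ ⊆ F₂ ⊆ … ⊆ Fₙ`, then `‖df‖₁ = ∑ⱼ aⱼ ‖d χ_{Fⱼ}‖₁`. -/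
theorem coboundary_layer_cake (Γ : Type*) [Fintype Γ] [DecidableEq Γ]
    (E : Finset (Γ × Γ)) (n : ℕ) (a : Fin n → ℝ) (F : Fin n → Finset Γ)
    (ha : ∀ j, 0 < a j) (hF : ∀ i j : Fin n, i ≤ j → F i ⊆ F j)
    (f : Γ → ℝ) (hf : ∀ x, f x = ∑ j, a j * (if x ∈ F j then (1 : ℝ) else 0)) :
    ∑ e ∈ E, |f e.2 - f e.1| =
      ∑ j, a j * ∑ e ∈ E, |((if e.2 ∈ F j then (1 : ℝ) else 0) -
        (if e.1 ∈ F j then (1 : ℝ) else 0))| := by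
  have key : ∀ e : Γ × Γ, |f e.2 - f e.1| =
      ∑ j, a j * |((if e.2 ∈ F j then (1:ℝ) else 0) - (if e.1 ∈ F j then (1:ℝ) else 0))| := by
    intro e
    set d : Fin n → ℝ := fun j =>
      (if e.2 ∈ F j then (1:ℝ) else 0) - (if e.1 ∈ F j then (1:ℝ) else 0) with hd
    have hsum : f e.2 - f e.1 = ∑ j, a j * d j := by
      rw [hf, hf, ← Finset.sum_sub_distrib]
      exact Finset.sum_congr rfl fun j _ => by simp only [hd, mul_sub, mul_ite, mul_one, mul_zero]
    have hsign : (∀ j, 0 ≤ d j) ∨ (∀ j, d j ≤ 0) := by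
      by_contra h
      push_neg at h
      obtain ⟨⟨i, hi⟩, ⟨j, hj⟩⟩ := h
      have hi' : e.1 ∈ F i ∧ e.2 ∉ F i := by
        by_cases h1 : e.1 ∈ F i <;> by_cases h2 : e.2 ∈ F i <;>
          simp [hd, h1, h2] at hi ⊢ <;> linarith
      have hj' : e.2 ∈ F j ∧ e.1 ∉ F j := by
        by_cases h1 : e.1 ∈ F j <;> by_cases h2 : e.2 ∈ F j <;>
          simp [hd, h1, h2] at hj ⊢ <;> linarith
      rcases le_total i j with hij | hij
      · exact hj'.2 (hF i j hij hi'.1)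
      · exact hi'.2 (hF j i hij hj'.1)
    rw [hsum]
    rcases hsign with h | h
    · rw [abs_of_nonneg (Finset.sum_nonneg fun j _ => mul_nonneg (ha j).le (h j))]
      exact Finset.sum_congr rfl fun j _ => by rw [abs_of_nonneg (h j)]
    · rw [abs_of_nonpos
        (Finset.sum_nonpos fun j _ => mul_nonpos_of_nonneg_of_nonpos (ha j).le (h j)),
        ← Finset.sum_neg_distrib]
      exact Finset.sum_congr rfl fun j _ => by rw [abs_of_nonpos (h j)]; ring
  rw [Finset.sum_congr rfl fun e _ => key e, Finset.sum_comm]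
  exact Finset.sum_congr rfl fun j _ => (Finset.mul_sum _ _ _).symm
end

section
/- Let T : V → W be a bounded linear map from a normed space V to a pre-Fréchet space W (with monotone countable seminorms). Then T is bounded below if and only if the induced map T^Q : V_Q → W_Q on quotient completions is injective, where V_Q = ℓ^∞(ℕ,V)/c₀(ℕ,V). -/
open Filter Topology

/-- a bounded linear map `T : V → W` from a normed space to a
pre-Fréchet space with monotone countable seminorms is bounded below if and only
if the induced map `T^Q : V_Q → W_Q` on quotient completions
(`V_Q = ℓ^∞(ℕ,V)/c₀(ℕ,V)`) is injective.  Injectivity of `T^Q` is expressed as: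
every bounded sequence `vₙ` whose image `T vₙ` has all seminorms tending to `0`
must itself tend to `0` in norm. -/
theorem bounded_below_iff_quotient_injective
    (V : Type*) [NormedAddCommGroup V] [NormedSpace ℝ V]
    (W : Type*) [AddCommGroup W] [Module ℝ W]
    (p : ℕ → Seminorm ℝ W) (hmono : ∀ i j : ℕ, i ≤ j → ∀ w, p i w ≤ p j w)
    (T : V →ₗ[ℝ] W)
    (hbdd : ∀ j : ℕ, ∃ C : ℝ, ∀ v, p j (T v) ≤ C * ‖v‖) :
    (∃ (j : ℕ) (c : ℝ), 0 < c ∧ ∀ v, c * ‖v‖ ≤ p j (T v)) ↔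
      (∀ v : ℕ → V, (∃ M : ℝ, ∀ n, ‖v n‖ ≤ M) →
        (∀ j : ℕ, Tendsto (fun n => p j (T (v n))) atTop (𝓝 0)) →
        Tendsto (fun n => ‖v n‖) atTop (𝓝 0)) := by
  constructor
  · rintro ⟨j, c, hc, hlow⟩ v _ htend
    have h := (htend j).const_mul c⁻¹
    rw [mul_zero] at h
    refine squeeze_zero (fun n => norm_nonneg _) (fun n => ?_) h
    rw [le_inv_mul_iff₀ hc]
    exact hlow (v n)
  · intro h
    by_contra hno
    push_neg at hno
    -- for each n, pick vₙ with p n (T vₙ) < (1/(n+1)) ‖vₙ‖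
    have hsel : ∀ n : ℕ, ∃ u : V, ‖u‖ = 1 ∧ p n (T u) < 1 / (n + 1) := by
      intro n
      obtain ⟨v, hv⟩ := hno n (1 / (n + 1)) (by positivity)
      have hvpos : 0 < ‖v‖ := by
        by_contra hle
        push_neg at hle
        have : ‖v‖ = 0 := le_antisymm hle (norm_nonneg v)
        rw [this, mul_zero] at hv
        exact absurd hv (not_lt.2 (apply_nonneg _ _))
      refine ⟨‖v‖⁻¹ • v, ?_, ?_⟩
      · rw [norm_smul, norm_inv, norm_norm, inv_mul_cancel₀ hvpos.ne']
      · rw [map_smul, map_smul_eq_mul, norm_inv, norm_norm]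
        calc ‖v‖⁻¹ * p n (T v) < ‖v‖⁻¹ * (1 / (↑n + 1) * ‖v‖) :=
              (mul_lt_mul_iff_right₀ (inv_pos.2 hvpos)).2 hv
          _ = 1 / (↑n + 1) := by field_simp
    choose u hu1 hu2 using hsel
    have htend : ∀ j : ℕ, Tendsto (fun n => p j (T (u n))) atTop (𝓝 0) := by
      intro j
      refine squeeze_zero' (Eventually.of_forall fun n => apply_nonneg _ _)
        (eventually_atTop.2 ⟨j, fun n hn => ?_⟩)
        tendsto_one_div_add_atTop_nhds_zero_nat
      exact le_of_lt (lt_of_le_of_lt (hmono j n hn _) (hu2 n))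
    have := h u ⟨1, fun n => (hu1 n).le⟩ htend
    have h1 : Tendsto (fun _ : ℕ => (1 : ℝ)) atTop (𝓝 0) := by
      simpa [hu1] using this
    exact absurd (tendsto_nhds_unique h1 tendsto_const_nhds) zero_ne_one
end
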